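/- Let Ω be a nonempty open subset of ℝ^d. Let Λ : L²_cpt(Ω) → ℂ be a linear functional such that, for every compact K ⊆ Ω, the restriction of Λ to L²_K(Ω) = {g ∈ L²_cpt(Ω) : essential support of g contained in K} is continuous with respect to the L²-norm. Then there exists f ∈ L²_loc(Ω), unique up to equality almost everywhere, such that Λ(g) = ∫_Ω f·g dλ for all g ∈ L²_cpt(Ω). Conversely, every f ∈ L²_loc(Ω) defines such a functional. In particular, the pairing (f,g) ↦ ∫_Ω f·g dλ identifies L²_loc(Ω) with the topological dual of L²_cpt(Ω) carrying the locally convex inductive limit (LF) topology of the subspaces L²_K(Ω). -/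

import Mathlib

open MeasureTheory

noncomputable section

/-- `L²_loc(Ω)` for an open set `Ω ⊆ ℝ^d`: the space of equivalence classes (modulo equality
almost everywhere) of functions `f : ℝ^d → ℂ` (with respect to Lebesgue measure restricted
to `Ω`) which are square integrable on every compact subset `K ⊆ Ω`. -/
def L2loc (d : ℕ) (Ω : Set (Fin d → ℝ)) :
    Submodule ℂ ((Fin d → ℝ) →ₘ[volume.restrict Ω] ℂ) where
  carrier := {f | ∀ K : Set (Fin d → ℝ), IsCompact K → K ⊆ Ω →
    eLpNorm f 2 ((volume.restrict Ω).restrict K) < ⊤}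
  add_mem' := by
    intro a b ha hb K hK hKΩ
    have h1 : ⇑(a + b) =ᵐ[((volume.restrict Ω)).restrict K] ⇑a + ⇑b :=
      (AEEqFun.coeFn_add a b).restrict
    rw [eLpNorm_congr_ae h1]
    exact (eLpNorm_add_le a.aestronglyMeasurable.restrict b.aestronglyMeasurable.restrict
      one_le_two).trans_lt (ENNReal.add_lt_top.mpr ⟨ha K hK hKΩ, hb K hK hKΩ⟩)
  zero_mem' := by
    intro K hK hKΩ
    have h1 : ⇑(0 : (Fin d → ℝ) →ₘ[volume.restrict Ω] ℂ)
        =ᵐ[((volume.restrict Ω)).restrict K] 0 := (AEEqFun.coeFn_zero).restrict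
    rw [eLpNorm_congr_ae h1, eLpNorm_zero]
    exact ENNReal.zero_lt_top
  smul_mem' := by
    intro c a ha K hK hKΩ
    have h1 : ⇑(c • a) =ᵐ[((volume.restrict Ω)).restrict K] c • ⇑a :=
      (AEEqFun.coeFn_smul c a).restrict
    rw [eLpNorm_congr_ae h1, eLpNorm_const_smul]
    exact ENNReal.mul_lt_top (by simp) (ha K hK hKΩ)

/-- An element of `L²_loc(Ω)` has compact essential support if it vanishes almost everywhere
outside some compact subset of `Ω`; these elements form the space `L²_cpt(Ω)`. -/
def HasCompactEssSupport (d : ℕ) (Ω : Set (Fin d → ℝ)) (f : L2loc d Ω) : Prop :=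
  ∃ C : Set (Fin d → ℝ), IsCompact C ∧ C ⊆ Ω ∧
    ∀ᵐ x ∂(volume.restrict Ω), x ∉ C →
      (f : (Fin d → ℝ) →ₘ[volume.restrict Ω] ℂ) x = 0

/-- `L²_cpt(Ω)`: the subspace of `L²_loc(Ω)` of elements with compact essential support
in `Ω`. -/
def L2cpt (d : ℕ) (Ω : Set (Fin d → ℝ)) : Submodule ℂ (L2loc d Ω) where
  carrier := {f | HasCompactEssSupport d Ω f}
  add_mem' := by
    rintro a b ⟨Ca, hCa, hCaΩ, ha⟩ ⟨Cb, hCb, hCbΩ, hb⟩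
    refine ⟨Ca ∪ Cb, hCa.union hCb, Set.union_subset hCaΩ hCbΩ, ?_⟩
    filter_upwards [AEEqFun.coeFn_add
      (a : (Fin d → ℝ) →ₘ[volume.restrict Ω] ℂ) (b : (Fin d → ℝ) →ₘ[volume.restrict Ω] ℂ),
      ha, hb] with x hx ha' hb' hxC
    simp only [Submodule.coe_add]
    rw [hx, Pi.add_apply, ha' (fun h => hxC (Set.mem_union_left _ h)),
      hb' (fun h => hxC (Set.mem_union_right _ h)), add_zero]
  zero_mem' := by
    refine ⟨∅, isCompact_empty, Set.empty_subset _, ?_⟩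
    filter_upwards [AEEqFun.coeFn_zero (β := ℂ) (μ := volume.restrict Ω)] with x hx _
    simpa using hx
  smul_mem' := by
    rintro c a ⟨C, hC, hCΩ, ha⟩
    refine ⟨C, hC, hCΩ, ?_⟩
    filter_upwards [AEEqFun.coeFn_smul c (a : (Fin d → ℝ) →ₘ[volume.restrict Ω] ℂ), ha]
      with x hx ha' hxC
    simp only [Submodule.coe_smul]
    rw [hx, Pi.smul_apply, ha' hxC, smul_zero]

end

/-!
On a compact `K ⊆ Ω`, composing `Λ` with multiplication by `𝟙_K` gives a bounded functional on
`L²(Ω)`, so the Riesz representation theorem yields `φ_K ∈ L²(Ω)` with `Λ g = ∫ φ_K g` for all `g`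
supported in `K`. Testing against `g = 𝟙_K · conj h` shows that a function which is `L²` on `K`
and pairs to zero with every such `g` vanishes a.e. on `K`. Hence the `φ_K` agree on overlaps, and
gluing them along a countable compact exhaustion of `Ω` gives the representing `f ∈ L²_loc(Ω)`;
the same test gives uniqueness. The converse is the Cauchy–Schwarz inequality on the support of
`g`.
-/

open Set
open scoped ENNReal

theorem IsOpen.exists_compact_exhaustion {X : Type*} [TopologicalSpace X]
    [LocallyCompactSpace X] [SecondCountableTopology X] {U : Set X} (hU : IsOpen U) :
    ∃ K : ℕ → Set X, (∀ n, IsCompact (K n)) ∧ ⋃ n, K n = U ∧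
      ∀ C, IsCompact C → C ⊆ U → ∃ n, C ⊆ K n := by
  have := hU.locallyCompactSpace
  let L := CompactExhaustion.choice U
  refine ⟨fun n ↦ (↑) '' L n, fun n ↦ (L.isCompact n).image continuous_subtype_val, ?_,
    fun C hC hCU ↦ ?_⟩
  · rw [← image_iUnion, L.iUnion_eq, image_univ, Subtype.range_coe]
  have hC' : IsCompact (((↑) : U → X) ⁻¹' C) := by
    rwa [Subtype.isCompact_iff, image_preimage_eq_of_subset (by simpa using hCU)]
  obtain ⟨n, hn⟩ := L.exists_superset_of_isCompact hC'
  exact ⟨n, fun x hx ↦ ⟨⟨x, hCU hx⟩, hn hx, rfl⟩⟩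

theorem exists_aestronglyMeasurable_forall_ae_eq_restrict {α β : Type*} [MeasurableSpace α]
    [TopologicalSpace β] [TopologicalSpace.PseudoMetrizableSpace β] {μ : Measure α}
    {K : ℕ → Set α} (hK : ∀ n, MeasurableSet (K n)) (hcover : ∀ᵐ x ∂μ, x ∈ ⋃ n, K n)
    {v : ℕ → α → β} (hv : ∀ n, AEStronglyMeasurable (v n) (μ.restrict (K n)))
    (hcompat : ∀ m n, v m =ᵐ[μ.restrict (K m ∩ K n)] v n) :
    ∃ F : α → β, AEStronglyMeasurable F μ ∧ ∀ n, F =ᵐ[μ.restrict (K n)] v n := by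
  classical
  let N : α → ℕ := fun x ↦ if h : ∃ n, x ∈ K n then Nat.find h else 0
  have hN : ∀ x n, x ∈ K n → x ∈ K (N x) := fun x n hx ↦ by
    have h : ∃ n, x ∈ K n := ⟨n, hx⟩
    simp only [N, dif_pos h]
    exact Nat.find_spec h
  have hF : ∀ n, (fun x ↦ v (N x) x) =ᵐ[μ.restrict (K n)] v n := fun n ↦ by
    have h : ∀ᵐ x ∂μ, ∀ m, x ∈ K m ∩ K n → v m x = v n x :=
      ae_all_iff.2 fun m ↦ (ae_restrict_iff' ((hK m).inter (hK n))).1 (hcompat m n)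
    filter_upwards [ae_restrict_of_ae h, ae_restrict_mem (hK n)] with x hx hxn
    exact hx _ ⟨hN x n hxn, hxn⟩
  refine ⟨fun x ↦ v (N x) x, ?_, hF⟩
  have hμ := Measure.restrict_eq_self_of_ae_mem hcover
  rw [← hμ, aestronglyMeasurable_iUnion_iff]
  exact fun n ↦ (hv n).congr (hF n).symm

theorem norm_integral_mul_le_eLpNorm_mul_eLpNorm {α 𝕜 : Type*} [MeasurableSpace α] [RCLike 𝕜]
    {μ : Measure α} {f g : α → 𝕜} (hf : MemLp f 2 μ) (hg : MemLp g 2 μ) :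
    ‖∫ x, f x * g x ∂μ‖ ≤ (eLpNorm f 2 μ).toReal * (eLpNorm g 2 μ).toReal := by
  calc ‖∫ x, f x * g x ∂μ‖ = ‖∫ x, f x * g x ∂μ‖ₑ.toReal := (toReal_enorm _).symm
    _ ≤ (eLpNorm f 2 μ * eLpNorm g 2 μ).toReal := by
        refine ENNReal.toReal_mono (ENNReal.mul_ne_top hf.eLpNorm_ne_top hg.eLpNorm_ne_top) ?_
        refine (enorm_integral_le_lintegral_enorm _).trans ?_
        have holder := eLpNorm_smul_le_mul_eLpNorm (p := 2) (q := 2) (r := 1) hg.1 hf.1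
        rwa [eLpNorm_one_eq_lintegral_enorm] at holder
    _ = _ := ENNReal.toReal_mul

section L2

variable {d : ℕ} {Ω : Set (Fin d → ℝ)}

/-- `g ∈ L²_C(Ω)`. -/
def VanishesOutside (g : L2cpt d Ω) (C : Set (Fin d → ℝ)) : Prop :=
  ∀ᵐ x ∂(volume.restrict Ω), x ∉ C → (g : (Fin d → ℝ) →ₘ[volume.restrict Ω] ℂ) x = 0

theorem VanishesOutside.mono {g : L2cpt d Ω} {C D : Set (Fin d → ℝ)}
    (hg : VanishesOutside g C) (hCD : C ⊆ D) : VanishesOutside g D :=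
  Filter.Eventually.mono hg fun _ hx hxD ↦ hx fun hxC ↦ hxD (hCD hxC)

theorem Lp.coe_mem_L2loc (u : Lp ℂ 2 (volume.restrict Ω)) :
    (u : (Fin d → ℝ) →ₘ[volume.restrict Ω] ℂ) ∈ L2loc d Ω := fun _ _ _ ↦
  (eLpNorm_mono_measure _ Measure.restrict_le_self).trans_lt (Lp.eLpNorm_lt_top u)

theorem L2loc.memLp_restrict (f : L2loc d Ω) {K : Set (Fin d → ℝ)} (hK : IsCompact K)
    (hKΩ : K ⊆ Ω) :
    MemLp (f : (Fin d → ℝ) →ₘ[volume.restrict Ω] ℂ) 2 ((volume.restrict Ω).restrict K) :=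
  ⟨(AEEqFun.aestronglyMeasurable _).restrict, f.2 K hK hKΩ⟩

namespace L2cpt

def ofLp (u : Lp ℂ 2 (volume.restrict Ω)) {K : Set (Fin d → ℝ)} (hK : IsCompact K)
    (hKΩ : K ⊆ Ω) (hu : ∀ᵐ x ∂(volume.restrict Ω), x ∉ K → u x = 0) : L2cpt d Ω :=
  ⟨⟨u, Lp.coe_mem_L2loc u⟩, K, hK, hKΩ, hu⟩

theorem ext_ae {g₁ g₂ : L2cpt d Ω}
    (h : (g₁ : (Fin d → ℝ) →ₘ[volume.restrict Ω] ℂ) =ᵐ[volume.restrict Ω]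
      (g₂ : (Fin d → ℝ) →ₘ[volume.restrict Ω] ℂ)) : g₁ = g₂ :=
  Subtype.ext <| Subtype.ext <| AEEqFun.ext h

theorem memLp (g : L2cpt d Ω) :
    MemLp (g : (Fin d → ℝ) →ₘ[volume.restrict Ω] ℂ) 2 (volume.restrict Ω) := by
  obtain ⟨C, hC, hCΩ, hg⟩ := g.2
  have hind : C.indicator (g : (Fin d → ℝ) →ₘ[volume.restrict Ω] ℂ)
      =ᵐ[volume.restrict Ω] (g : (Fin d → ℝ) →ₘ[volume.restrict Ω] ℂ) :=
    indicator_ae_eq_of_restrict_compl_ae_eq_zero hC.measurableSet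
      ((ae_restrict_iff' hC.measurableSet.compl).2 hg)
  exact (memLp_congr_ae hind).1
    ((memLp_indicator_iff_restrict hC.measurableSet).2 (L2loc.memLp_restrict _ hC hCΩ))

def toLp (g : L2cpt d Ω) : Lp ℂ 2 (volume.restrict Ω) :=
  ⟨g, Lp.mem_Lp_iff_memLp.2 (memLp g)⟩

noncomputable def indicatorₗ {K : Set (Fin d → ℝ)} (hK : IsCompact K) (hKΩ : K ⊆ Ω) :
    Lp ℂ 2 (volume.restrict Ω) →ₗ[ℂ] L2cpt d Ω :=
  let χ : Lp ℂ ∞ (volume.restrict Ω) :=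
    indicatorConstLp ∞ hK.measurableSet hK.measure_lt_top.ne 1
  { toFun u := ofLp (χ • u : Lp ℂ 2 (volume.restrict Ω)) hK hKΩ <| by
      have hχ : ∀ᵐ x ∂(volume.restrict Ω), x ∉ K → χ x = 0 := indicatorConstLp_coeFn_notMem
      filter_upwards [Lp.coeFn_lpSMul (r := 2) χ u, hχ] with x hx hχx hxK
      simp [hx, hχx hxK]
    map_add' u v := by simp only [Lp.add_smul]; rfl
    map_smul' c u := by simp only [← Lp.smul_comm]; rfl }

variable {K : Set (Fin d → ℝ)} (hK : IsCompact K) (hKΩ : K ⊆ Ω)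

theorem coeFn_indicatorₗ (u : Lp ℂ 2 (volume.restrict Ω)) :
    (indicatorₗ hK hKΩ u : (Fin d → ℝ) →ₘ[volume.restrict Ω] ℂ) =ᵐ[volume.restrict Ω]
      K.indicator u := by
  filter_upwards [Lp.coeFn_lpSMul (r := 2)
      (indicatorConstLp ∞ hK.measurableSet hK.measure_lt_top.ne (1 : ℂ)) u,
    indicatorConstLp_coeFn (p := ∞) (hs := hK.measurableSet) (hμs := hK.measure_lt_top.ne)
      (c := (1 : ℂ))] with x hx hχ
  refine hx.trans ?_
  rw [Pi.smul_apply', hχ]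
  by_cases hxK : x ∈ K <;> simp [hxK]

theorem vanishesOutside_indicatorₗ (u : Lp ℂ 2 (volume.restrict Ω)) :
    VanishesOutside (indicatorₗ hK hKΩ u) K := by
  filter_upwards [coeFn_indicatorₗ hK hKΩ u] with x hx hxK
  rw [hx, indicator_of_notMem hxK]

theorem eLpNorm_indicatorₗ_le (u : Lp ℂ 2 (volume.restrict Ω)) :
    eLpNorm (indicatorₗ hK hKΩ u : (Fin d → ℝ) →ₘ[volume.restrict Ω] ℂ) 2 (volume.restrict Ω) ≤
      eLpNorm u 2 (volume.restrict Ω) := by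
  rw [eLpNorm_congr_ae (coeFn_indicatorₗ hK hKΩ u)]
  exact eLpNorm_indicator_le _

theorem indicatorₗ_toLp {g : L2cpt d Ω} (hg : VanishesOutside g K) :
    indicatorₗ hK hKΩ (toLp g) = g := by
  refine ext_ae ((coeFn_indicatorₗ hK hKΩ _).trans ?_)
  filter_upwards [hg] with x hx
  by_cases hxK : x ∈ K
  · exact indicator_of_mem hxK _
  · rw [indicator_of_notMem hxK, hx hxK]

end L2cpt

open L2cpt

variable {K : Set (Fin d → ℝ)}

theorem integrable_mul_of_vanishesOutside {h : (Fin d → ℝ) → ℂ}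
    (hh : MemLp h 2 ((volume.restrict Ω).restrict K)) {g : L2cpt d Ω}
    (hg : VanishesOutside g K) :
    Integrable (fun x ↦ h x * (g : (Fin d → ℝ) →ₘ[volume.restrict Ω] ℂ) x)
      (volume.restrict Ω) := by
  refine IntegrableOn.integrable_of_ae_notMem_eq_zero (s := K) ?_ ?_
  · exact hh.integrable_mul ((memLp g).restrict K)
  · filter_upwards [hg] with x hx hxK
    rw [hx hxK, mul_zero]

theorem L2loc.integrable_mul (f : L2loc d Ω) (g : L2cpt d Ω) :
    Integrable (fun x ↦ (f : (Fin d → ℝ) →ₘ[volume.restrict Ω] ℂ) x *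
      (g : (Fin d → ℝ) →ₘ[volume.restrict Ω] ℂ) x) (volume.restrict Ω) :=
  have ⟨_, hC, hCΩ, hg⟩ := g.2
  integrable_mul_of_vanishesOutside (L2loc.memLp_restrict f hC hCΩ) hg

theorem exists_memLp_forall_vanishesOutside_eq_integral (hK : IsCompact K) (hKΩ : K ⊆ Ω)
    (Λ : L2cpt d Ω →ₗ[ℂ] ℂ) {M : ℝ} (hM : ∀ g : L2cpt d Ω, VanishesOutside g K →
      ‖Λ g‖ ≤ M * (eLpNorm (g : (Fin d → ℝ) →ₘ[volume.restrict Ω] ℂ) 2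
        (volume.restrict Ω)).toReal) :
    ∃ φ : (Fin d → ℝ) → ℂ, MemLp φ 2 (volume.restrict Ω) ∧ ∀ g : L2cpt d Ω,
      VanishesOutside g K → Λ g = ∫ x, φ x * (g : (Fin d → ℝ) →ₘ[volume.restrict Ω] ℂ) x
        ∂(volume.restrict Ω) := by
  have hbound : ∀ u, ‖Λ (indicatorₗ hK hKΩ u)‖ ≤ max M 0 * ‖u‖ := fun u ↦
    calc ‖Λ (indicatorₗ hK hKΩ u)‖
        ≤ M * (eLpNorm (indicatorₗ hK hKΩ u : (Fin d → ℝ) →ₘ[volume.restrict Ω] ℂ) 2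
          (volume.restrict Ω)).toReal := hM _ (vanishesOutside_indicatorₗ hK hKΩ u)
      _ ≤ max M 0 * ‖u‖ := mul_le_mul (le_max_left _ _)
          (ENNReal.toReal_mono (Lp.eLpNorm_ne_top u) (eLpNorm_indicatorₗ_le hK hKΩ u))
          ENNReal.toReal_nonneg (le_max_right _ _)
  let Φ : StrongDual ℂ (Lp ℂ 2 (volume.restrict Ω)) :=
    (Λ ∘ₗ indicatorₗ hK hKΩ).mkContinuous (max M 0) hbound
  let v := (InnerProductSpace.toDual ℂ (Lp ℂ 2 (volume.restrict Ω))).symm Φ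
  refine ⟨star ⇑v, (Lp.memLp v).star, fun g hg ↦ ?_⟩
  calc Λ g = Φ (toLp g) := (congrArg Λ (indicatorₗ_toLp hK hKΩ hg)).symm
    _ = inner ℂ v (toLp g) := InnerProductSpace.toDual_symm_apply.symm
    _ = _ := by simp only [L2.inner_def, RCLike.inner_apply']; rfl

theorem ae_eq_zero_of_forall_vanishesOutside_integral_mul_eq_zero (hK : IsCompact K)
    (hKΩ : K ⊆ Ω) {h : (Fin d → ℝ) → ℂ} (hh : MemLp h 2 ((volume.restrict Ω).restrict K))
    (h0 : ∀ g : L2cpt d Ω, VanishesOutside g K →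
      ∫ x, h x * (g : (Fin d → ℝ) →ₘ[volume.restrict Ω] ℂ) x ∂(volume.restrict Ω) = 0) :
    h =ᵐ[(volume.restrict Ω).restrict K] 0 := by
  have hψ : MemLp (K.indicator (star h)) 2 (volume.restrict Ω) :=
    (memLp_indicator_iff_restrict hK.measurableSet).2 hh.star
  have hψK : ∀ᵐ x ∂(volume.restrict Ω), x ∉ K → hψ.toLp _ x = 0 := by
    filter_upwards [hψ.coeFn_toLp] with x hx hxK
    rw [hx, indicator_of_notMem hxK]
  have hsq : ∫ x in K, ((‖h x‖ ^ 2 : ℝ) : ℂ) ∂(volume.restrict Ω) = 0 :=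
    calc ∫ x in K, ((‖h x‖ ^ 2 : ℝ) : ℂ) ∂(volume.restrict Ω)
        = ∫ x, h x * K.indicator (star h) x ∂(volume.restrict Ω) := by
          rw [← integral_indicator hK.measurableSet]
          congr 1 with x
          by_cases hxK : x ∈ K <;> simp [hxK, RCLike.mul_conj]
      _ = ∫ x, h x * (ofLp (hψ.toLp _) hK hKΩ hψK : (Fin d → ℝ) →ₘ[volume.restrict Ω] ℂ) x
          ∂(volume.restrict Ω) :=
          integral_congr_ae <| by filter_upwards [hψ.coeFn_toLp] with x hx; rw [← hx]; rfl
      _ = 0 := h0 _ hψK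
  rw [integral_complex_ofReal, Complex.ofReal_eq_zero,
    integral_eq_zero_iff_of_nonneg (fun x ↦ by positivity) (hh.integrable_norm_pow two_ne_zero)]
    at hsq
  filter_upwards [hsq] with x hx
  simpa using hx

theorem ae_eq_of_forall_vanishesOutside_integral_mul_eq (hK : IsCompact K) (hKΩ : K ⊆ Ω)
    {h₁ h₂ : (Fin d → ℝ) → ℂ} (hh₁ : MemLp h₁ 2 ((volume.restrict Ω).restrict K))
    (hh₂ : MemLp h₂ 2 ((volume.restrict Ω).restrict K))
    (heq : ∀ g : L2cpt d Ω, VanishesOutside g K →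
      ∫ x, h₁ x * (g : (Fin d → ℝ) →ₘ[volume.restrict Ω] ℂ) x ∂(volume.restrict Ω) =
        ∫ x, h₂ x * (g : (Fin d → ℝ) →ₘ[volume.restrict Ω] ℂ) x ∂(volume.restrict Ω)) :
    h₁ =ᵐ[(volume.restrict Ω).restrict K] h₂ := by
  refine (ae_eq_zero_of_forall_vanishesOutside_integral_mul_eq_zero hK hKΩ (hh₁.sub hh₂)
    fun g hg ↦ ?_).mono fun x hx ↦ sub_eq_zero.1 hx
  simp only [Pi.sub_apply, sub_mul]
  rw [integral_sub (integrable_mul_of_vanishesOutside hh₁ hg)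
    (integrable_mul_of_vanishesOutside hh₂ hg), heq g hg, sub_self]

theorem exists_L2loc_forall_eq_integral_mul (hΩ : IsOpen Ω) (Λ : L2cpt d Ω →ₗ[ℂ] ℂ)
    (hΛ : ∀ C, IsCompact C → C ⊆ Ω → ∃ M : ℝ, ∀ g : L2cpt d Ω, VanishesOutside g C →
      ‖Λ g‖ ≤ M * (eLpNorm (g : (Fin d → ℝ) →ₘ[volume.restrict Ω] ℂ) 2
        (volume.restrict Ω)).toReal) :
    ∃ f : L2loc d Ω, ∀ g : L2cpt d Ω,
      Λ g = ∫ x, (f : (Fin d → ℝ) →ₘ[volume.restrict Ω] ℂ) x *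
        (g : (Fin d → ℝ) →ₘ[volume.restrict Ω] ℂ) x ∂(volume.restrict Ω) := by
  obtain ⟨K, hKc, hKU, hKabs⟩ := hΩ.exists_compact_exhaustion
  have hKΩ : ∀ n, K n ⊆ Ω := fun n ↦ hKU ▸ subset_iUnion K n
  have hcover : ∀ᵐ x ∂(volume.restrict Ω), x ∈ ⋃ n, K n := by
    rw [hKU]; exact ae_restrict_mem hΩ.measurableSet
  have hrep : ∀ n, ∃ φ : (Fin d → ℝ) → ℂ, MemLp φ 2 (volume.restrict Ω) ∧
      ∀ g : L2cpt d Ω, VanishesOutside g (K n) → Λ g = ∫ x, φ x *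
        (g : (Fin d → ℝ) →ₘ[volume.restrict Ω] ℂ) x ∂(volume.restrict Ω) := fun n ↦
    have ⟨_, hM⟩ := hΛ _ (hKc n) (hKΩ n)
    exists_memLp_forall_vanishesOutside_eq_integral (hKc n) (hKΩ n) Λ hM
  choose φ hφ hΛφ using hrep
  have hcompat : ∀ m n, φ m =ᵐ[(volume.restrict Ω).restrict (K m ∩ K n)] φ n := fun m n ↦
    ae_eq_of_forall_vanishesOutside_integral_mul_eq ((hKc m).inter (hKc n))
      (inter_subset_left.trans (hKΩ m)) ((hφ m).restrict _) ((hφ n).restrict _) fun g hg ↦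
      (hΛφ m g (hg.mono inter_subset_left)).symm.trans (hΛφ n g (hg.mono inter_subset_right))
  obtain ⟨F, hFm, hF⟩ := exists_aestronglyMeasurable_forall_ae_eq_restrict
    (fun n ↦ (hKc n).measurableSet) hcover
    (fun n ↦ (hφ n).1.restrict) hcompat
  refine ⟨⟨AEEqFun.mk F hFm, fun C hC hCΩ ↦ ?_⟩, fun g ↦ ?_⟩
  · obtain ⟨n, hn⟩ := hKabs C hC hCΩ
    calc eLpNorm (AEEqFun.mk F hFm) 2 ((volume.restrict Ω).restrict C)
        = eLpNorm F 2 ((volume.restrict Ω).restrict C) :=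
          eLpNorm_congr_ae (AEEqFun.coeFn_mk F hFm).restrict
      _ ≤ eLpNorm F 2 ((volume.restrict Ω).restrict (K n)) :=
          eLpNorm_mono_measure _ (Measure.restrict_mono hn le_rfl)
      _ = eLpNorm (φ n) 2 ((volume.restrict Ω).restrict (K n)) := eLpNorm_congr_ae (hF n)
      _ ≤ eLpNorm (φ n) 2 (volume.restrict Ω) := eLpNorm_mono_measure _ Measure.restrict_le_self
      _ < ⊤ := (hφ n).eLpNorm_lt_top
  · obtain ⟨C, hC, hCΩ, hgC⟩ := g.2
    obtain ⟨n, hn⟩ := hKabs C hC hCΩ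
    have hg : VanishesOutside g (K n) := VanishesOutside.mono hgC hn
    rw [hΛφ n g hg]
    refine integral_congr_ae ?_
    filter_upwards [(ae_restrict_iff' (hKc n).measurableSet).1 (hF n), hg,
      AEEqFun.coeFn_mk F hFm] with x hFx hgx hmk
    by_cases hx : x ∈ K n
    · simp only [hmk, hFx hx]
    · simp only [hgx hx, mul_zero]

theorem L2loc.ext_of_forall_integral_mul_eq (hΩ : IsOpen Ω) {f₁ f₂ : L2loc d Ω}
    (h : ∀ g : L2cpt d Ω,
      ∫ x, (f₁ : (Fin d → ℝ) →ₘ[volume.restrict Ω] ℂ) x *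
        (g : (Fin d → ℝ) →ₘ[volume.restrict Ω] ℂ) x ∂(volume.restrict Ω) =
      ∫ x, (f₂ : (Fin d → ℝ) →ₘ[volume.restrict Ω] ℂ) x *
        (g : (Fin d → ℝ) →ₘ[volume.restrict Ω] ℂ) x ∂(volume.restrict Ω)) :
    f₁ = f₂ := by
  obtain ⟨K, hKc, hKU, -⟩ := hΩ.exists_compact_exhaustion
  have hKΩ : ∀ n, K n ⊆ Ω := fun n ↦ hKU ▸ subset_iUnion K n
  have hcover : ∀ᵐ x ∂(volume.restrict Ω), x ∈ ⋃ n, K n := by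
    rw [hKU]; exact ae_restrict_mem hΩ.measurableSet
  have heq : ∀ n, ∀ᵐ x ∂(volume.restrict Ω), x ∈ K n →
      (f₁ : (Fin d → ℝ) →ₘ[volume.restrict Ω] ℂ) x =
        (f₂ : (Fin d → ℝ) →ₘ[volume.restrict Ω] ℂ) x := fun n ↦
    (ae_restrict_iff' (hKc n).measurableSet).1 <|
      ae_eq_of_forall_vanishesOutside_integral_mul_eq (hKc n) (hKΩ n)
        (L2loc.memLp_restrict f₁ (hKc n) (hKΩ n)) (L2loc.memLp_restrict f₂ (hKc n) (hKΩ n))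
        fun g _ ↦ h g
  refine Subtype.ext (AEEqFun.ext ?_)
  filter_upwards [ae_all_iff.2 heq, hcover] with x hx hxK
  obtain ⟨n, hn⟩ := mem_iUnion.1 hxK
  exact hx n hn

theorem L2loc.isLinearMap_integral_mul (f : L2loc d Ω) :
    IsLinearMap ℂ fun g : L2cpt d Ω ↦ ∫ x, (f : (Fin d → ℝ) →ₘ[volume.restrict Ω] ℂ) x *
      (g : (Fin d → ℝ) →ₘ[volume.restrict Ω] ℂ) x ∂(volume.restrict Ω) where
  map_add g₁ g₂ := by
    rw [← integral_add (L2loc.integrable_mul f g₁) (L2loc.integrable_mul f g₂)]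
    refine integral_congr_ae ?_
    filter_upwards [AEEqFun.coeFn_add (g₁ : (Fin d → ℝ) →ₘ[volume.restrict Ω] ℂ)
      (g₂ : (Fin d → ℝ) →ₘ[volume.restrict Ω] ℂ)] with x hx
    rw [Submodule.coe_add, Submodule.coe_add, hx, Pi.add_apply, mul_add]
  map_smul c g := by
    rw [smul_eq_mul, ← integral_const_mul]
    refine integral_congr_ae ?_
    filter_upwards [AEEqFun.coeFn_smul c (g : (Fin d → ℝ) →ₘ[volume.restrict Ω] ℂ)] with x hx
    rw [Submodule.coe_smul, Submodule.coe_smul, hx, Pi.smul_apply, smul_eq_mul, mul_left_comm]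

theorem L2loc.norm_integral_mul_le (f : L2loc d Ω) {C : Set (Fin d → ℝ)} (hC : IsCompact C)
    (hCΩ : C ⊆ Ω) {g : L2cpt d Ω} (hg : VanishesOutside g C) :
    ‖∫ x, (f : (Fin d → ℝ) →ₘ[volume.restrict Ω] ℂ) x *
      (g : (Fin d → ℝ) →ₘ[volume.restrict Ω] ℂ) x ∂(volume.restrict Ω)‖ ≤
    (eLpNorm (f : (Fin d → ℝ) →ₘ[volume.restrict Ω] ℂ) 2
      ((volume.restrict Ω).restrict C)).toReal *
    (eLpNorm (g : (Fin d → ℝ) →ₘ[volume.restrict Ω] ℂ) 2 (volume.restrict Ω)).toReal := by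
  rw [← setIntegral_eq_integral_of_ae_compl_eq_zero (s := C)
    (Filter.Eventually.mono hg fun x hx hxC ↦ by rw [hx hxC, mul_zero])]
  refine (norm_integral_mul_le_eLpNorm_mul_eLpNorm (L2loc.memLp_restrict f hC hCΩ)
    (L2loc.memLp_restrict _ hC hCΩ)).trans ?_
  exact mul_le_mul_of_nonneg_left (ENNReal.toReal_mono (memLp g).eLpNorm_ne_top
    (eLpNorm_mono_measure _ Measure.restrict_le_self)) ENNReal.toReal_nonneg

end L2

theorem L2loc_dual_of_L2cpt_general (d : ℕ) (Ω : Set (Fin d → ℝ)) (hΩ : IsOpen Ω) :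
    (∀ Λ : L2cpt d Ω →ₗ[ℂ] ℂ,
      (∀ C : Set (Fin d → ℝ), IsCompact C → C ⊆ Ω →
        ∃ M : ℝ, ∀ g : L2cpt d Ω,
          (∀ᵐ x ∂(volume.restrict Ω), x ∉ C →
            ((g : L2loc d Ω) : (Fin d → ℝ) →ₘ[volume.restrict Ω] ℂ) x = 0) →
          ‖Λ g‖ ≤ M * (eLpNorm ((g : L2loc d Ω) : (Fin d → ℝ) →ₘ[volume.restrict Ω] ℂ) 2
            (volume.restrict Ω)).toReal) →
      ∃! f : L2loc d Ω, ∀ g : L2cpt d Ω,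
        Λ g = ∫ x, (f : (Fin d → ℝ) →ₘ[volume.restrict Ω] ℂ) x *
          ((g : L2loc d Ω) : (Fin d → ℝ) →ₘ[volume.restrict Ω] ℂ) x ∂(volume.restrict Ω)) ∧
    (∀ f : L2loc d Ω,
      IsLinearMap ℂ (fun g : L2cpt d Ω =>
        ∫ x, (f : (Fin d → ℝ) →ₘ[volume.restrict Ω] ℂ) x *
          ((g : L2loc d Ω) : (Fin d → ℝ) →ₘ[volume.restrict Ω] ℂ) x ∂(volume.restrict Ω)) ∧
      ∀ C : Set (Fin d → ℝ), IsCompact C → C ⊆ Ω →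
        ∃ M : ℝ, ∀ g : L2cpt d Ω,
          (∀ᵐ x ∂(volume.restrict Ω), x ∉ C →
            ((g : L2loc d Ω) : (Fin d → ℝ) →ₘ[volume.restrict Ω] ℂ) x = 0) →
          ‖∫ x, (f : (Fin d → ℝ) →ₘ[volume.restrict Ω] ℂ) x *
            ((g : L2loc d Ω) : (Fin d → ℝ) →ₘ[volume.restrict Ω] ℂ) x ∂(volume.restrict Ω)‖ ≤
          M * (eLpNorm ((g : L2loc d Ω) : (Fin d → ℝ) →ₘ[volume.restrict Ω] ℂ) 2
            (volume.restrict Ω)).toReal) := by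
  
  refine ⟨fun Λ hΛ ↦ ?_, fun f ↦ ⟨L2loc.isLinearMap_integral_mul f, fun C hC hCΩ ↦
    ⟨_, fun g hg ↦ L2loc.norm_integral_mul_le f hC hCΩ hg⟩⟩⟩
  obtain ⟨f, hf⟩ := exists_L2loc_forall_eq_integral_mul hΩ Λ hΛ
  exact ⟨f, hf, fun f' hf' ↦ L2loc.ext_of_forall_integral_mul_eq hΩ fun g ↦
    (hf' g).symm.trans (hf g)⟩

/-- **`L²_loc(Ω)` is the topological dual of `L²_cpt(Ω)`** (the paper's Theorem 2.9, second
half, scalar case): a linear functional `Λ` on `L²_cpt(Ω)` whose restriction to each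
`L²_K(Ω)` (elements with essential support in a fixed compact `K ⊆ Ω`) is continuous for
the `L²`-norm — i.e. `Λ` is continuous for the locally convex inductive limit (LF) topology
— is represented by a unique `f ∈ L²_loc(Ω)` via `Λ(g) = ∫ f·g dλ`; conversely every
`f ∈ L²_loc(Ω)` defines such a functional. -/
theorem L2loc_dual_of_L2cpt (d : ℕ) (Ω : Set (Fin d → ℝ)) (hΩ : IsOpen Ω) (hne : Ω.Nonempty) :
    (∀ Λ : L2cpt d Ω →ₗ[ℂ] ℂ,
      (∀ C : Set (Fin d → ℝ), IsCompact C → C ⊆ Ω →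
        ∃ M : ℝ, ∀ g : L2cpt d Ω,
          (∀ᵐ x ∂(volume.restrict Ω), x ∉ C →
            ((g : L2loc d Ω) : (Fin d → ℝ) →ₘ[volume.restrict Ω] ℂ) x = 0) →
          ‖Λ g‖ ≤ M * (eLpNorm ((g : L2loc d Ω) : (Fin d → ℝ) →ₘ[volume.restrict Ω] ℂ) 2
            (volume.restrict Ω)).toReal) →
      ∃! f : L2loc d Ω, ∀ g : L2cpt d Ω,
        Λ g = ∫ x, (f : (Fin d → ℝ) →ₘ[volume.restrict Ω] ℂ) x *
          ((g : L2loc d Ω) : (Fin d → ℝ) →ₘ[volume.restrict Ω] ℂ) x ∂(volume.restrict Ω)) ∧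
    (∀ f : L2loc d Ω,
      IsLinearMap ℂ (fun g : L2cpt d Ω =>
        ∫ x, (f : (Fin d → ℝ) →ₘ[volume.restrict Ω] ℂ) x *
          ((g : L2loc d Ω) : (Fin d → ℝ) →ₘ[volume.restrict Ω] ℂ) x ∂(volume.restrict Ω)) ∧
      ∀ C : Set (Fin d → ℝ), IsCompact C → C ⊆ Ω →
        ∃ M : ℝ, ∀ g : L2cpt d Ω,
          (∀ᵐ x ∂(volume.restrict Ω), x ∉ C →
            ((g : L2loc d Ω) : (Fin d → ℝ) →ₘ[volume.restrict Ω] ℂ) x = 0) →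
          ‖∫ x, (f : (Fin d → ℝ) →ₘ[volume.restrict Ω] ℂ) x *
            ((g : L2loc d Ω) : (Fin d → ℝ) →ₘ[volume.restrict Ω] ℂ) x ∂(volume.restrict Ω)‖ ≤
          M * (eLpNorm ((g : L2loc d Ω) : (Fin d → ℝ) →ₘ[volume.restrict Ω] ℂ) 2
            (volume.restrict Ω)).toReal) :=
  L2loc_dual_of_L2cpt_general d Ω hΩ
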